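/- arXiv:0811.0377 — 5 statements merged into one kernel-verified Lean document; each statement's English description precedes it below -/
import Mathlib

section
/- For the Emden-type ODE a''(t) = -λ/a(t) with λ > 0, any positive solution is bounded above: a(t) ≤ exp(θ/λ) for all t ≥ 0, where θ = λ ln a₀ + (1/2)a₁². -/
open Real Set

theorem emden_upper_bound
    (lam a₀ a₁ : ℝ) (hlam : 0 < lam) (ha₀ : 0 < a₀)
    (a : ℝ → ℝ) (ha : ContDiff ℝ 2 a)
    (hpos : ∀ t ∈ Ici (0:ℝ), 0 < a t)
    (hode : ∀ t ∈ Ici (0:ℝ), deriv (deriv a) t = -lam / a t)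
    (hinit : a 0 = a₀) (hinit' : deriv a 0 = a₁) :
    ∀ t ∈ Ici (0:ℝ), a t ≤ Real.exp ((lam * Real.log a₀ + (1/2) * a₁^2) / lam) := by
  have hda : Differentiable ℝ a := ha.differentiable (by norm_num)
  have ha' : ContDiff ℝ 1 (deriv a) := ((contDiff_succ_iff_deriv (n := 1)).mp (by exact_mod_cast ha)).2.2
  have hda' : Differentiable ℝ (deriv a) := ha'.differentiable (by norm_num)
  set E : ℝ → ℝ := fun t => lam * Real.log (a t) + (1/2) * (deriv a t)^2 with hE
  have hderivE : ∀ x ∈ Ici (0:ℝ), HasDerivAt E 0 x := by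
    intro x hx
    have hax : 0 < a x := hpos x hx
    have h1 : HasDerivAt a (deriv a x) x := (hda x).hasDerivAt
    have h2 : HasDerivAt (deriv a) (deriv (deriv a) x) x := (hda' x).hasDerivAt
    have hlog : HasDerivAt (fun t => Real.log (a t)) (deriv a x / a x) x :=
      h1.log (ne_of_gt hax)
    have hsq : HasDerivAt (fun t => (deriv a t)^2) (2 * deriv a x * deriv (deriv a) x) x := by
      simpa using (h2.fun_pow 2)
    have := (hlog.const_mul lam).add (hsq.const_mul (1/2 : ℝ))
    have heq : lam * (deriv a x / a x) + (1/2) * (2 * deriv a x * deriv (deriv a) x) = 0 := by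
      rw [hode x hx]
      field_simp
      ring
    rw [heq] at this
    exact this
  intro t ht
  have hEt : E t = E 0 := by
    rcases eq_or_lt_of_le (mem_Ici.mp ht) with h | h
    · rw [← h]
    · have hcont : ContinuousOn E (Icc 0 t) := fun x hx =>
        (hderivE x hx.1).continuousAt.continuousWithinAt
      have := constant_of_has_deriv_right_zero hcont (fun x hx =>
        (hderivE x hx.1).hasDerivWithinAt) t (right_mem_Icc.mpr h.le)
      exact this
  have hE0 : E 0 = lam * Real.log a₀ + (1/2) * a₁^2 := by
    simp [hE, hinit, hinit']
  have hat : 0 < a t := hpos t ht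
  have hle : lam * Real.log (a t) ≤ lam * Real.log a₀ + (1/2) * a₁^2 := by
    have h2 : E t ≤ lam * Real.log a₀ + (1/2) * a₁^2 := by rw [hEt, hE0]
    simp only [hE] at h2
    nlinarith [sq_nonneg (deriv a t)]
  have hlog : Real.log (a t) ≤ (lam * Real.log a₀ + (1/2) * a₁^2) / lam := by
    rw [le_div_iff₀ hlam]; linarith [hle]
  calc a t = Real.exp (Real.log (a t)) := (Real.exp_log hat).symm
    _ ≤ _ := Real.exp_le_exp.mpr hlog
end

section
/- There is no global positive solution to the Emden-type ODE a''(t) = -λ/a(t) with λ > 0: for any C² function a : [0,∞) → ℝ with a(0) = a₀ > 0, a'(0) = a₁, and a''(t) = -λ/a(t) wherever a(t) > 0, there exists a finite time T such that a(T) = 0 (equivalently, a cannot remain positive for all t ≥ 0). -/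
open Real Set

theorem emden_no_global_positive_solution
    (lam a₀ a₁ : ℝ) (hlam : 0 < lam) (ha₀ : 0 < a₀)
    (a : ℝ → ℝ) (ha : ContDiff ℝ 2 a)
    (hinit : a 0 = a₀) (hinit' : deriv a 0 = a₁)
    (hode : ∀ t ∈ Ici (0:ℝ), 0 < a t → deriv (deriv a) t = -lam / a t) :
    ∃ T : ℝ, 0 ≤ T ∧ a T = 0 := by
  by_contra hcon
  push_neg at hcon
  have hd : Differentiable ℝ a := ha.differentiable (by norm_num)
  have hca : Continuous a := hd.continuous
  -- positivity of a on [0, ∞)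
  have hpos : ∀ t, 0 ≤ t → 0 < a t := by
    intro t ht
    rcases lt_or_ge 0 (a t) with h | h
    · exact h
    · exfalso
      have hat : a t < 0 := lt_of_le_of_ne h (hcon t ht)
      have h0 : (0:ℝ) ∈ Icc (a t) (a 0) := ⟨hat.le, by rw [hinit]; exact ha₀.le⟩
      obtain ⟨s, hs, has⟩ := intermediate_value_Icc' ht hca.continuousOn h0
      exact hcon s hs.1 has
  have ha1 : ContDiff ℝ 1 (deriv a) := by
    have := (contDiff_succ_iff_deriv.mp (show ContDiff ℝ ((1:ℕ)+1) a by exact_mod_cast ha)).2.2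
    exact_mod_cast this
  have hd' : Differentiable ℝ (deriv a) := ha1.differentiable (by norm_num)
  -- a' is strictly decreasing on [0, ∞)
  have hanti : StrictAntiOn (deriv a) (Ici (0:ℝ)) := by
    apply strictAntiOn_of_deriv_neg (convex_Ici 0) hd'.continuous.continuousOn
    intro t ht
    rw [interior_Ici] at ht
    have hat := hpos t ht.le
    rw [hode t (mem_Ici.mpr (le_of_lt ht)) hat]
    exact div_neg_of_neg_of_pos (neg_lt_zero.mpr hlam) hat
  by_cases hc : ∃ t₂, 0 ≤ t₂ ∧ deriv a t₂ < 0
  · -- a' negative somewhere: a goes below any line with negative slope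
    obtain ⟨t₂, ht₂, hdt₂⟩ := hc
    set c := deriv a t₂ with hc'
    have hg : AntitoneOn (fun t => a t - c * t) (Ici t₂) := by
      apply antitoneOn_of_deriv_nonpos (convex_Ici t₂)
      · exact (hca.continuousOn).sub (continuous_const.mul continuous_id).continuousOn
      · intro t ht
        exact ((hd t).sub ((differentiable_const c).mul differentiable_id t)).differentiableWithinAt
      · intro t ht
        rw [interior_Ici] at ht
        have hD : HasDerivAt (fun s => a s - c * s) (deriv a t - c) t := by
          exact ((hd t).hasDerivAt.sub ((hasDerivAt_id t).const_mul c)).congr_deriv (by ring)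
        rw [hD.deriv]
        have : deriv a t < deriv a t₂ := hanti (mem_Ici.mpr ht₂) (mem_Ici.mpr (ht₂.trans ht.le)) ht
        linarith
    set T := t₂ + a t₂ / (-c) with hT
    have hTt₂ : t₂ ≤ T := by
      have h0 : 0 < a t₂ / (-c) := div_pos (hpos t₂ ht₂) (by linarith)
      rw [hT]; linarith
    have hgT := hg (self_mem_Ici) (mem_Ici.mpr hTt₂) hTt₂
    simp only at hgT
    have hcne : c ≠ 0 := ne_of_lt hdt₂
    have hkey : c * (a t₂ / -c) = -(a t₂) := by
      rw [div_neg, mul_neg, mul_div_cancel₀ _ hcne]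
    have hTnn : 0 ≤ T := le_trans ht₂ hTt₂
    have hposT := hpos T hTnn
    have hmul : c * T = c * t₂ + c * (a t₂ / -c) := by rw [hT]; ring
    clear_value c T
    linarith [hgT, hmul, hkey, hposT]
  · -- a' nonnegative everywhere: comparison with logarithmic bound
    push_neg at hc
    have ha₁pos : 0 < a₁ := by
      have h01 : deriv a 1 < deriv a 0 := hanti self_mem_Ici (mem_Ici.mpr zero_le_one) zero_lt_one
      have h1 := hc 1 zero_le_one
      rw [hinit'] at h01
      linarith
    -- upper bound a t ≤ a₀ + a₁ t
    have hub : ∀ t, 0 ≤ t → a t ≤ a₀ + a₁ * t := by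
      have hmono : MonotoneOn (fun t => a₀ + a₁ * t - a t) (Ici (0:ℝ)) := by
        apply monotoneOn_of_deriv_nonneg (convex_Ici 0)
        · exact ((continuous_const.add (continuous_const.mul continuous_id)).sub hca).continuousOn
        · intro t ht
          exact (((differentiable_const a₀).add ((differentiable_const a₁).mul differentiable_id)).sub hd t).differentiableWithinAt
        · intro t ht
          rw [interior_Ici] at ht
          have hD : HasDerivAt (fun s => a₀ + a₁ * s - a s) (a₁ - deriv a t) t := by
            exact (((hasDerivAt_const t a₀).add ((hasDerivAt_id t).const_mul a₁)).sub (hd t).hasDerivAt).congr_deriv (by ring)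
          rw [hD.deriv]
          have : deriv a t < deriv a 0 := hanti self_mem_Ici (mem_Ici.mpr ht.le) ht
          rw [hinit'] at this
          linarith
      intro t ht
      have := hmono self_mem_Ici (mem_Ici.mpr ht) ht
      simp only [mul_zero, add_zero, hinit] at this
      linarith
    set φ : ℝ → ℝ := fun t => a₁ - lam / a₁ * Real.log (1 + a₁ / a₀ * t) with hφ
    have hφd : ∀ t, 0 ≤ t → HasDerivAt φ (-(lam / (a₀ + a₁ * t))) t := by
      intro t ht
      have hft : 0 < 1 + a₁ / a₀ * t := by positivity
      have hf : HasDerivAt (fun s => 1 + a₁ / a₀ * s) (a₁ / a₀) t := by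
        exact ((hasDerivAt_const t (1:ℝ)).add ((hasDerivAt_id t).const_mul (a₁/a₀))).congr_deriv (by ring)
      have hlog : HasDerivAt (fun s => Real.log (1 + a₁ / a₀ * s)) ((a₁/a₀) / (1 + a₁/a₀*t)) t :=
        hf.log hft.ne'
      have h2 : HasDerivAt φ (-(lam / a₁ * ((a₁/a₀) / (1 + a₁/a₀*t)))) t := by
        exact ((hasDerivAt_const t a₁).sub (hlog.const_mul (lam/a₁))).congr_deriv (by ring)
      convert h2 using 1
      have h3 : (0:ℝ) < a₀ + a₁ * t := by positivity
      field_simp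
    have hψ : AntitoneOn (fun t => deriv a t - φ t) (Ici (0:ℝ)) := by
      apply antitoneOn_of_deriv_nonpos (convex_Ici 0)
      · exact hd'.continuous.continuousOn.sub
          (fun t ht => (hφd t ht).continuousAt.continuousWithinAt)
      · intro t ht
        rw [interior_Ici] at ht
        exact ((hd' t).sub (hφd t ht.le).differentiableAt).differentiableWithinAt
      · intro t ht
        rw [interior_Ici] at ht
        have hD : HasDerivAt (fun s => deriv a s - φ s)
            (deriv (deriv a) t - -(lam / (a₀ + a₁ * t))) t :=
          ((hd' t).hasDerivAt).sub (hφd t ht.le)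
        rw [hD.deriv]
        have hat := hpos t ht.le
        rw [hode t (mem_Ici.mpr (le_of_lt ht)) hat]
        have h1 : a t ≤ a₀ + a₁ * t := hub t ht.le
        have h2 : lam / (a₀ + a₁ * t) ≤ lam / a t := by gcongr
        have h3 : -lam / a t = -(lam / a t) := by ring
        linarith [h3]
    set T := a₀ / a₁ * Real.exp (a₁^2 / lam) with hT
    have hTpos : 0 < T := by positivity
    have hψT := hψ self_mem_Ici (mem_Ici.mpr hTpos.le) hTpos.le
    simp only at hψT
    have hψ0 : deriv a 0 - φ 0 = 0 := by
      simp [hφ, hinit']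
    have he : a₁ / a₀ * T = Real.exp (a₁^2 / lam) := by
      rw [hT]; field_simp
    have hφT : φ T < 0 := by
      have hlog : a₁^2 / lam < Real.log (1 + Real.exp (a₁^2 / lam)) := by
        calc a₁^2/lam = Real.log (Real.exp (a₁^2/lam)) := (Real.log_exp _).symm
        _ < Real.log (1 + Real.exp (a₁^2/lam)) :=
            Real.log_lt_log (exp_pos _) (by linarith [exp_pos (a₁^2/lam)])
      have hkey : lam / a₁ * (a₁^2 / lam) = a₁ := by field_simp
      have hlampos : 0 < lam / a₁ := div_pos hlam ha₁pos
      have : a₁ < lam / a₁ * Real.log (1 + Real.exp (a₁^2 / lam)) := by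
        nlinarith
      simp only [hφ, he]
      linarith
    have hcT := hc T hTpos.le
    linarith
end

section
/- Let a be a solution of a''(t) = -λ/a(t) with a(t) > 0, and set y(x) = (λ/(2K))x² + α, ρ(t,r) = exp(y(r/a(t)))/a(t)^N, u(t,r) = (a'(t)/a(t))·r. Then the momentum equation of the isothermal Navier-Stokes equations in radial symmetry holds: ρ(u_t + u u_r) + K ρ_r = v(u_rr + ((N-1)/r) u_r − ((N-1)/r²) u) for all r > 0. -/
open Real Set

theorem isothermal_NS_momentum
    (N : ℕ) (hN : 1 ≤ N) (K v lam α : ℝ) (hK : 0 < K) (hv : 0 < v)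
    (a : ℝ → ℝ) (ha : ContDiff ℝ 2 a) (hapos : ∀ t, 0 < a t)
    (hode : ∀ t, deriv (deriv a) t = -lam / a t)
    (y : ℝ → ℝ) (hy : ∀ x, y x = lam / (2 * K) * x^2 + α)
    (ρ u : ℝ → ℝ → ℝ)
    (hρ : ∀ t r, ρ t r = Real.exp (y (r / a t)) / (a t)^N)
    (hu : ∀ t r, u t r = (deriv a t / a t) * r) :
    ∀ t : ℝ, ∀ r : ℝ, 0 < r →
      ρ t r * (deriv (fun τ => u τ r) t + u t r * deriv (fun s => u t s) r)
        + K * deriv (fun s => ρ t s) r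
      = v * (deriv (fun s => deriv (fun s' => u t s') s) r
          + (((N : ℝ) - 1) / r) * deriv (fun s => u t s) r
          - (((N : ℝ) - 1) / r^2) * u t r) := by
  intro t r hr
  have hd1 : Differentiable ℝ a := ha.differentiable (by norm_num)
  have ha2 : ContDiff ℝ (1 + 1) a := by exact_mod_cast ha
  have hd2 : Differentiable ℝ (deriv a) :=
    ((contDiff_succ_iff_deriv.mp ha2).2.2).differentiable (by norm_num)
  have hA : a t ≠ 0 := (hapos t).ne'
  have hrne : r ≠ 0 := hr.ne'
  -- t derivative of u
  have h1 : HasDerivAt a (deriv a t) t := (hd1 t).hasDerivAt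
  have h2 : HasDerivAt (deriv a) (deriv (deriv a) t) t := (hd2 t).hasDerivAt
  have hq : HasDerivAt (fun τ => deriv a τ / a τ)
      ((deriv (deriv a) t * a t - deriv a t * deriv a t) / (a t)^2) t :=
    h2.div h1 hA
  have hut : deriv (fun τ => u τ r) t
      = (deriv (deriv a) t * a t - deriv a t * deriv a t) / (a t)^2 * r := by
    have := (hq.mul_const r).deriv
    simpa only [hu] using this
  -- r derivative of u
  have hur : ∀ s : ℝ, deriv (fun s' => u t s') s = deriv a t / a t := by
    intro s
    have : HasDerivAt (fun s' => deriv a t / a t * s') (deriv a t / a t * 1) s :=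
      (hasDerivAt_id s).const_mul _
    simpa only [hu, mul_one] using this.deriv
  have hurr : deriv (fun s => deriv (fun s' => u t s') s) r = 0 := by
    have : (fun s => deriv (fun s' => u t s') s) = fun _ => deriv a t / a t :=
      funext fun s => hur s
    rw [this, deriv_const]
  -- r derivative of ρ
  have hg : HasDerivAt (fun s => lam / (2 * K) * (s / a t)^2 + α)
      (lam / (2 * K) * (2 * (r / a t)^1 * (1 / a t))) r := by
    have h0 : HasDerivAt (fun s : ℝ => s / a t) (1 / a t) r := by
      simpa using (hasDerivAt_id r).div_const (a t)
    exact ((h0.pow 2).const_mul _).add_const α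
  have hρr : deriv (fun s => ρ t s) r
      = Real.exp (lam / (2 * K) * (r / a t)^2 + α)
          * (lam / (2 * K) * (2 * (r / a t)^1 * (1 / a t))) / (a t)^N := by
    have := (hg.exp.div_const ((a t)^N)).deriv
    simpa only [hρ, hy] using this
  rw [hut, hurr, hur, hρr, hρ, hy, hu, hode]
  have hexp : Real.exp (lam / (2 * K) * (r / a t)^2 + α) ≠ 0 := Real.exp_ne_zero _
  have hAN : (a t)^N ≠ 0 := pow_ne_zero _ hA
  field_simp
  ring
end

section
/- Let a be a positive C² solution of a''(t) = λ a'(t)/a(t)², and set y(x) = (λ/(2Nκ))x² + α, ρ(t,r) = exp(y(r/a(t)))/a(t)^N, u(t,r) = (a'(t)/a(t))·r. Then the pressureless momentum equation with density-dependent viscosity μ(ρ) = κρ holds: ρ(u_t + u u_r) = (κρ)_r·(((N-1)/r)u + u_r) + κρ·(u_rr + ((N-1)/r)u_r − ((N-1)/r²)u) for all r > 0. -/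
open Real Set

theorem pressureless_NS_momentum_theta_one
    (N : ℕ) (hN : 1 ≤ N) (κ lam α : ℝ) (hκ : 0 < κ)
    (a : ℝ → ℝ) (ha : ContDiff ℝ 2 a) (hapos : ∀ t, 0 < a t)
    (hode : ∀ t, deriv (deriv a) t = lam * deriv a t / (a t)^2)
    (y : ℝ → ℝ) (hy : ∀ x, y x = lam / (2 * (N : ℝ) * κ) * x^2 + α)
    (ρ u : ℝ → ℝ → ℝ)
    (hρ : ∀ t r, ρ t r = Real.exp (y (r / a t)) / (a t)^N)
    (hu : ∀ t r, u t r = (deriv a t / a t) * r) :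
    ∀ t : ℝ, ∀ r : ℝ, 0 < r →
      ρ t r * (deriv (fun τ => u τ r) t + u t r * deriv (fun s => u t s) r)
      = deriv (fun s => κ * ρ t s) r * ((((N : ℝ) - 1) / r) * u t r + deriv (fun s => u t s) r)
        + κ * ρ t r * (deriv (fun s => deriv (fun s' => u t s') s) r
            + (((N : ℝ) - 1) / r) * deriv (fun s => u t s) r
            - (((N : ℝ) - 1) / r^2) * u t r) := by
  intro t r hr
  have hNR : (N : ℝ) ≠ 0 := by positivity
  have hκ' : κ ≠ 0 := ne_of_gt hκ
  have hr' : r ≠ 0 := ne_of_gt hr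
  have hA : a t ≠ 0 := ne_of_gt (hapos t)
  obtain ⟨hdiff, hderiv1⟩ := contDiff_succ_iff_deriv.mp (by exact_mod_cast ha : ContDiff ℝ ((1 : ℕ) + 1) a)
  have hdiff' : Differentiable ℝ (deriv a) := hderiv1.2.differentiable (by simp)
  -- derivative in time
  have h1 : deriv (fun τ => u τ r) t
      = (deriv (deriv a) t * a t - deriv a t * deriv a t) / (a t)^2 * r := by
    have : (fun τ => u τ r) = fun τ => (deriv a τ / a τ) * r := by
      funext τ; rw [hu]
    rw [this]
    exact (((hdiff'.differentiableAt.hasDerivAt).div (hdiff.differentiableAt.hasDerivAt) hA).mul_const r).deriv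
  -- derivative of u in space
  have h2 : ∀ s : ℝ, deriv (fun s' => u t s') s = deriv a t / a t := by
    intro s
    have : (fun s' => u t s') = fun s' => (deriv a t / a t) * s' := by
      funext s'; rw [hu]
    rw [this]
    simpa using ((hasDerivAt_id s).const_mul (deriv a t / a t)).deriv
  -- second derivative of u in space
  have h3 : deriv (fun s => deriv (fun s' => u t s') s) r = 0 := by
    have : (fun s => deriv (fun s' => u t s') s) = fun _ => deriv a t / a t := by
      funext s; exact h2 s
    rw [this]; simp
  -- derivative of κ ρ in space
  have h4 : deriv (fun s => κ * ρ t s) r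
      = κ * (Real.exp (lam / (2 * (N : ℝ) * κ) * (r / a t)^2 + α)
          * (lam / (2 * (N : ℝ) * κ) * (2 * (r / a t)^1 * (1 / a t))) / (a t)^N) := by
    have heq : (fun s => κ * ρ t s)
        = fun s => κ * (Real.exp (lam / (2 * (N : ℝ) * κ) * (s / a t)^2 + α) / (a t)^N) := by
      funext s; rw [hρ, hy]
    rw [heq]
    have hd : HasDerivAt (fun s : ℝ => s / a t) (1 / a t) r := by
      simpa using (hasDerivAt_id r).div_const (a t)
    have := (((((hd.pow 2).const_mul (lam / (2 * (N : ℝ) * κ))).add_const α).exp).div_const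
        ((a t)^N)).const_mul κ
    exact this.deriv
  rw [h1, h3, h2, h4, hρ, hy, hu]
  have hode' := hode t
  rw [hode']
  field_simp
  ring
end

section
/- Let a be a positive C² solution of the damped Emden equation a''(t) + β a'(t) = -λ/a(t) with β ≥ 0, and set y(x) = (λ/(2K))x² + α, ρ(t,r) = exp(y(r/a(t)))/a(t)^N, u(t,r) = (a'(t)/a(t))·r. Then the damped isothermal momentum equation ρ(u_t + u u_r) + K ρ_r + β ρ u = v(u_rr + ((N-1)/r)u_r − ((N-1)/r²)u) holds for all r > 0. -/
open Real Set

theorem damped_isothermal_NS_momentum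
    (N : ℕ) (hN : 1 ≤ N) (K v β lam α : ℝ) (hK : 0 < K) (hv : 0 ≤ v) (hβ : 0 ≤ β)
    (a : ℝ → ℝ) (ha : ContDiff ℝ 2 a) (hapos : ∀ t, 0 < a t)
    (hode : ∀ t, deriv (deriv a) t + β * deriv a t = -lam / a t)
    (y : ℝ → ℝ) (hy : ∀ x, y x = lam / (2 * K) * x^2 + α)
    (ρ u : ℝ → ℝ → ℝ)
    (hρ : ∀ t r, ρ t r = Real.exp (y (r / a t)) / (a t)^N)
    (hu : ∀ t r, u t r = (deriv a t / a t) * r) :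
    ∀ t : ℝ, ∀ r : ℝ, 0 < r →
      ρ t r * (deriv (fun τ => u τ r) t + u t r * deriv (fun s => u t s) r)
        + K * deriv (fun s => ρ t s) r + β * ρ t r * u t r
      = v * (deriv (fun s => deriv (fun s' => u t s') s) r
          + (((N : ℝ) - 1) / r) * deriv (fun s => u t s) r
          - (((N : ℝ) - 1) / r^2) * u t r) := by
  intro t r hr
  have hA : 0 < a t := hapos t
  have hAne : a t ≠ 0 := hA.ne'
  have hKne : K ≠ 0 := hK.ne'
  have hrne : r ≠ 0 := hr.ne'
  have hda : Differentiable ℝ a := ha.differentiable (by norm_num)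
  have hda' : Differentiable ℝ (deriv a) := by
    have h2 : ContDiff ℝ ((1:ℕ∞) + 1) a := by norm_num; exact ha
    exact (contDiff_succ_iff_deriv.mp h2).2.2.differentiable (by norm_num)
  set A := a t with hAdef
  set A' := deriv a t with hA'def
  set A'' := deriv (deriv a) t with hA''def
  -- u_t
  have hut : deriv (fun τ => u τ r) t = (A'' * A - A' * A') / A ^ 2 * r := by
    have h1 : (fun τ => u τ r) = fun τ => deriv a τ / a τ * r := by
      funext τ; rw [hu]
    rw [h1]
    exact ((((hda' t).hasDerivAt).div ((hda t).hasDerivAt) hAne).mul_const r).deriv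
  -- u_r
  have hur : deriv (fun s => u t s) r = A' / A := by
    have h1 : (fun s => u t s) = fun s => A' / A * s := by
      funext s; rw [hu]
    rw [h1]
    simpa using ((hasDerivAt_id r).const_mul (A' / A)).deriv
  -- u_rr
  have hurr : deriv (fun s => deriv (fun s' => u t s') s) r = 0 := by
    have h1 : (fun s => deriv (fun s' => u t s') s) = fun _ => A' / A := by
      funext s
      have h2 : (fun s' => u t s') = fun s' => A' / A * s' := by
        funext s'; rw [hu]
      rw [h2]
      simpa using ((hasDerivAt_id s).const_mul (A' / A)).deriv
    rw [h1, deriv_const]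
  -- ρ_r
  have hρr : deriv (fun s => ρ t s) r
      = Real.exp (lam / (2 * K) * (r / A) ^ 2 + α) * (lam / (2 * K) * (2 * (r / A) * (1 / A))) / A ^ N := by
    have h1 : (fun s => ρ t s) = fun s => Real.exp (lam / (2 * K) * (s / A) ^ 2 + α) / A ^ N := by
      funext s; rw [hρ, hy]
    rw [h1]
    have hf : HasDerivAt (fun s => lam / (2 * K) * (s / A) ^ 2 + α)
        (lam / (2 * K) * (2 * (r / A) * (1 / A))) r := by
      have h2 : HasDerivAt (fun s : ℝ => (s / A) ^ 2) (2 * (r / A) * (1 / A)) r := by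
        have := (((hasDerivAt_id r).div_const A).pow 2)
        simpa [Pi.pow_def, mul_comm, mul_assoc, mul_left_comm] using this
      simpa [mul_assoc] using (h2.const_mul (lam / (2 * K))).add_const α
    exact (hf.exp.div_const (A ^ N)).deriv
  rw [hut, hur, hurr, hρr, hρ, hy, hu]
  have hode' : A'' = -lam / A - β * A' := by
    have := hode t; rw [← hA'def, ← hA''def, ← hAdef] at this; linarith
  rw [hode']
  have hexp : Real.exp (lam / (2 * K) * (r / A) ^ 2 + α) ≠ 0 := (Real.exp_pos _).ne'
  have hANe : A ^ N ≠ 0 := pow_ne_zero _ hAne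
  rw [← hAdef, ← hA'def]
  set E := Real.exp (lam / (2 * K) * (r / A) ^ 2 + α) with hE
  field_simp
  ring
end
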